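/- arXiv:1301.6883 — 4 statements merged into one kernel-verified Lean document; each statement's English description precedes it below -/
import Mathlib

section
/- Let A, B be C*-algebras, C a common C*-subalgebra of both, A₀ ⊆ A and B₀ ⊆ B dense *-subalgebras, and π : A₀ → B₀ a surjective *-homomorphism. Suppose P_A : A → C is a conditional expectation and P_B : B → C is a faithful conditional expectation such that P_B ∘ π = P_A on A₀. Then π extends to a surjective *-homomorphism from A onto B. -/
/-!
A faithful positive map `P` detects norms of positive elements: if `0 ≤ s < ‖x‖`, a spectral
cutoff `w ≠ 0` of `x` above `s` satisfies `sᵐ • w⋆w ≤ xᵐ`, so `‖P (xᵐ)‖` grows at least like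
`sᵐ ‖P (w⋆w)‖` with `P (w⋆w) ≠ 0`. Applied to `x = (π a)⋆(π a)` with `PB ∘ π = PA` contractive,
this gives `‖π a‖ ≤ ‖a‖`, so `π` extends by continuity to a ⋆-homomorphism on `A`.
The range of a ⋆-homomorphism of C⋆-algebras is closed, since every element of it has a preimage
of norm at most twice its own; as it contains the dense `B₀`, the extension is onto.
-/

open Filter

theorem le_of_forall_pow_mul_le {s M δ : ℝ} (hδ : 0 < δ) (hs : 0 ≤ s)
    (h : ∀ m : ℕ, 0 < m → s ^ m * δ ≤ M ^ m) : s ≤ M := by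
  by_contra! hMs
  have hM : 0 ≤ M := by nlinarith [h 1 one_pos]
  have hs : 0 < s := hM.trans_lt hMs
  have hlim : Tendsto (fun m : ℕ => (M / s) ^ m) atTop (nhds 0) :=
    tendsto_pow_atTop_nhds_zero_of_lt_one (by positivity) ((div_lt_one hs).mpr hMs)
  obtain ⟨m, hm, hm_pos⟩ :=
    ((hlim.eventually (gt_mem_nhds hδ)).and (eventually_gt_atTop 0)).exists
  have := h m hm_pos
  rw [div_pow, div_lt_iff₀ (by positivity)] at hm
  linarith

section Order

variable {B C : Type*} [CStarAlgebra B] [PartialOrder B] [StarOrderedRing B]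

theorem CStarAlgebra.exists_ne_zero_smul_star_mul_self_le_pow {x : B} (hx : 0 ≤ x) {s : ℝ}
    (hs : 0 ≤ s) (hsx : s < ‖x‖) :
    ∃ w : B, w ≠ 0 ∧ ∀ m : ℕ, s ^ m • (star w * w) ≤ x ^ m := by
  set g : ℝ → ℝ := fun l => min 1 (max 0 (l - s))
  have hg : Continuous g := by fun_prop
  have hw : IsSelfAdjoint (cfc g x) := cfc_predicate g x
  refine ⟨cfc g x, fun hw0 => ?_, fun m => ?_⟩
  · have : Nontrivial B := nontrivial_of_ne x 0 (by rintro rfl; simp at hsx; linarith)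
    have hle := norm_apply_le_norm_cfc g x (CStarAlgebra.norm_mem_spectrum_of_nonneg hx)
    rw [hw0, norm_zero, Real.norm_eq_abs] at hle
    have hpos : 0 < g ‖x‖ := lt_min one_pos (lt_max_of_lt_right (sub_pos.mpr hsx))
    linarith [le_abs_self (g ‖x‖)]
  · rw [hw.star_eq, ← cfc_mul g g x, ← cfc_const_mul (s ^ m) (fun l => g l * g l) x,
      ← cfc_pow_id (R := ℝ) x m]
    refine cfc_mono fun l hl => ?_
    have hl0 : 0 ≤ l := spectrum_nonneg_of_nonneg hx hl
    rcases le_or_gt l s with hls | hls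
    · have : g l = 0 := by simp [g, hls]
      simp only [this, mul_zero]
      positivity
    · have hg0 : 0 ≤ g l := le_min zero_le_one (le_max_left _ _)
      have hg1 : g l ≤ 1 := min_le_left _ _
      calc s ^ m * (g l * g l) ≤ s ^ m * 1 := by gcongr; nlinarith
        _ ≤ l ^ m := by rw [mul_one]; gcongr

variable [CStarAlgebra C] [PartialOrder C] [StarOrderedRing C]

theorem LinearMap.monotone_of_map_star_mul_self_nonneg (P : B →ₗ[ℂ] C)
    (hPpos : ∀ b, 0 ≤ P (star b * b)) : Monotone P := by
  intro a b hab
  obtain ⟨c, hc⟩ := CStarAlgebra.nonneg_iff_eq_star_mul_self.mp (sub_nonneg.mpr hab)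
  have := hPpos c
  rwa [← hc, map_sub, sub_nonneg] at this

theorem norm_le_of_faithful_of_norm_map_pow_le (P : B →ₗ[ℂ] C)
    (hPpos : ∀ b, 0 ≤ P (star b * b)) (hPfaithful : ∀ b, P (star b * b) = 0 → b = 0)
    {x : B} (hx : 0 ≤ x) {M : ℝ} (hM : ∀ m : ℕ, 0 < m → ‖P (x ^ m)‖ ≤ M ^ m) : ‖x‖ ≤ M := by
  refine le_of_forall_lt_imp_le_of_dense fun s hsx => ?_
  rcases lt_or_ge s 0 with hs | hs
  · linarith [norm_nonneg (P x), pow_one M ▸ pow_one x ▸ hM 1 one_pos]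
  obtain ⟨w, hw0, hw⟩ := CStarAlgebra.exists_ne_zero_smul_star_mul_self_le_pow hx hs hsx
  have hδ : 0 < ‖P (star w * w)‖ := norm_pos_iff.mpr (mt (hPfaithful w) hw0)
  refine le_of_forall_pow_mul_le hδ hs fun m hm => ?_
  calc s ^ m * ‖P (star w * w)‖ = ‖P (s ^ m • (star w * w))‖ := by
        rw [P.map_smul_of_tower, norm_smul, Real.norm_of_nonneg (by positivity)]
    _ ≤ ‖P (x ^ m)‖ := by
        refine CStarAlgebra.norm_le_norm_of_nonneg_of_le ?_
          (P.monotone_of_map_star_mul_self_nonneg hPpos (hw m))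
        rw [P.map_smul_of_tower]
        exact smul_nonneg (by positivity) (hPpos w)
    _ ≤ M ^ m := hM m hm

end Order

theorem StarAlgHom.norm_apply_le_of_faithful {A₀ B C : Type*} [NormedRing A₀] [StarRing A₀]
    [CStarRing A₀] [NormedAlgebra ℂ A₀] [CStarAlgebra B] [CStarAlgebra C] [PartialOrder C]
    [StarOrderedRing C] (π : A₀ →⋆ₐ[ℂ] B) (P : B →ₗ[ℂ] C) (hPpos : ∀ b, 0 ≤ P (star b * b))
    (hPfaithful : ∀ b, P (star b * b) = 0 → b = 0) (hcontr : ∀ a, ‖P (π a)‖ ≤ ‖a‖) (a : A₀) :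
    ‖π a‖ ≤ ‖a‖ := by
  let _ := CStarAlgebra.spectralOrder B
  have _ := CStarAlgebra.spectralOrderedRing B
  have h : ‖star (π a) * π a‖ ≤ ‖star a * a‖ :=
    norm_le_of_faithful_of_norm_map_pow_le P hPpos hPfaithful (star_mul_self_nonneg _)
      fun m hm =>
        calc ‖P ((star (π a) * π a) ^ m)‖ = ‖P (π ((star a * a) ^ m))‖ := by
              rw [map_pow π, map_mul π, map_star π]
          _ ≤ ‖(star a * a) ^ m‖ := hcontr _
          _ ≤ ‖star a * a‖ ^ m := norm_pow_le' _ hm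
  rw [CStarRing.norm_star_mul_self, CStarRing.norm_star_mul_self] at h
  exact (mul_self_le_mul_self_iff (norm_nonneg _) (norm_nonneg _)).mpr h

namespace StarAlgHom

section Extension

variable {A B : Type*} [NormedRing A] [NormedAlgebra ℂ A] [StarRing A] [StarModule ℂ A]
  [ContinuousStar A] [NormedRing B] [NormedAlgebra ℂ B] [StarRing B] [ContinuousStar B]
  [CompleteSpace B] {A₀ : StarSubalgebra ℂ A}

noncomputable def extendOfDense (hA₀ : Dense (A₀ : Set A)) (π : A₀ →⋆ₐ[ℂ] B)
    (hπ : Continuous π) : A →⋆ₐ[ℂ] B :=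
  let F := ContinuousLinearMap.extend ⟨π.toLinearMap, hπ⟩ A₀.toSubalgebra.toSubmodule.subtypeL
  have hF : ∀ a : A₀, F a = π a :=
    ContinuousLinearMap.extend_eq _ hA₀.denseRange_val (isUniformInducing_val _)
  { toFun := F
    map_one' := by rw [← OneMemClass.coe_one A₀, hF, map_one]
    map_mul' := hA₀.denseRange_val.induction_on₂ (isClosed_eq (by fun_prop) (by fun_prop))
      fun a b => by rw [← MulMemClass.coe_mul, hF, hF, hF, map_mul]
    map_zero' := F.map_zero
    map_add' := F.map_add
    commutes' := fun z => (hF (algebraMap ℂ A₀ z)).trans (π.commutes z)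
    map_star' := fun x => hA₀.denseRange_val.induction_on x
      (isClosed_eq (by fun_prop) (by fun_prop))
      fun a => by rw [← StarMemClass.coe_star, hF, hF, map_star] }

variable (hA₀ : Dense (A₀ : Set A)) (π : A₀ →⋆ₐ[ℂ] B) (hπ : Continuous π)

theorem extendOfDense_coe (a : A₀) : extendOfDense hA₀ π hπ a = π a :=
  ContinuousLinearMap.extend_eq _ hA₀.denseRange_val (isUniformInducing_val _) a

theorem continuous_extendOfDense : Continuous (extendOfDense hA₀ π hπ) :=
  ContinuousLinearMap.continuous _

end Extension

section Range

open scoped CStarAlgebra ComplexStarModule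

variable {A B : Type*} [CStarAlgebra A] [CStarAlgebra B] (φ : A →⋆ₐ[ℂ] B)

theorem exists_apply_eq_norm_le_of_isSelfAdjoint {x : A} (hx : IsSelfAdjoint x) :
    ∃ u, φ u = φ x ∧ ‖u‖ ≤ ‖φ x‖ := by
  let f : ℝ → ℝ := fun l => max (-‖φ x‖) (min ‖φ x‖ l)
  refine ⟨cfc f x, ?_, norm_cfc_le (norm_nonneg _) fun l _ => ?_⟩
  -- the spectrum of `φ x` lies in `[-‖φ x‖, ‖φ x‖]`, where `f` is the identity
  · rw [φ.map_cfc f x]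
    conv_rhs => rw [← cfc_id' ℝ (φ x) (hx.map φ)]
    refine cfc_congr fun l hl => ?_
    have hl' := norm_apply_le_norm_cfc id (φ x) hl (ha := hx.map φ)
    rw [cfc_id ℝ (φ x) (hx.map φ), id, Real.norm_eq_abs, abs_le] at hl'
    simp only [f, min_eq_right hl'.2, max_eq_right hl'.1]
  · rw [Real.norm_eq_abs, abs_le]
    exact ⟨le_max_left _ _, max_le (by linarith [norm_nonneg (φ x)]) (min_le_left _ _)⟩

theorem exists_apply_eq_norm_le (x : A) : ∃ u, φ u = φ x ∧ ‖u‖ ≤ 2 * ‖φ x‖ := by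
  obtain ⟨u₁, hu₁, hn₁⟩ := φ.exists_apply_eq_norm_le_of_isSelfAdjoint (ℜ x).2
  obtain ⟨u₂, hu₂, hn₂⟩ := φ.exists_apply_eq_norm_le_of_isSelfAdjoint (ℑ x).2
  refine ⟨u₁ + Complex.I • u₂, ?_, ?_⟩
  · rw [map_add, map_smul, hu₁, hu₂, ← map_smul, ← map_add, realPart_add_I_smul_imaginaryPart]
  calc ‖u₁ + Complex.I • u₂‖ ≤ ‖u₁‖ + ‖u₂‖ := by
        simpa [norm_smul] using norm_add_le u₁ (Complex.I • u₂)
    _ ≤ ‖φ (ℜ x)‖ + ‖φ (ℑ x)‖ := add_le_add hn₁ hn₂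
    _ ≤ ‖φ x‖ + ‖φ x‖ := by
        rw [map_realPart, map_imaginaryPart]
        exact add_le_add (realPart.norm_le (φ x)) (imaginaryPart.norm_le (φ x))
    _ = 2 * ‖φ x‖ := by ring

theorem isClosed_range : IsClosed (Set.range φ) := by
  let f : NormedAddGroupHom A B := (φ : A →+ B).mkNormedAddGroupHom 1 fun x => by
    simpa using NonUnitalStarAlgHom.norm_apply_le φ x
  have hf : f.SurjectiveOnWith (φ : A →+ B).range 2 := by
    rintro _ ⟨x, rfl⟩
    exact φ.exists_apply_eq_norm_le x
  refine isClosed_of_closure_subset fun b hb => ?_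
  obtain ⟨u, hu, -⟩ := controlled_closure_of_complete two_pos one_pos hf b hb
  exact ⟨u, hu⟩

end Range

end StarAlgHom

theorem stmt0_general
    {A B C : Type*} [CStarAlgebra A] [CStarAlgebra B] [CStarAlgebra C]
    [PartialOrder C] [StarOrderedRing C]
    (A₀ : StarSubalgebra ℂ A) (B₀ : StarSubalgebra ℂ B)
    (hA₀ : Dense (A₀ : Set A)) (hB₀ : Dense (B₀ : Set B))
    (π : A₀ →⋆ₐ[ℂ] B) (hπ : Set.range π = (B₀ : Set B))
    (PA : A →ₗ[ℂ] C) (PB : B →ₗ[ℂ] C)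
    -- `PA` is a conditional expectation onto `C`:
    (hPAcontr : ∀ a, ‖PA a‖ ≤ ‖a‖)
    -- `PB` is a faithful conditional expectation onto `C`:
    (hPBpos : ∀ b : B, 0 ≤ PB (star b * b))
    (hPBfaithful : ∀ b : B, PB (star b * b) = 0 → b = 0)
    -- compatibility: `PB ∘ π = PA` on `A₀`:
    (hcompat : ∀ a : A₀, PB (π a) = PA (a : A)) :
    ∃ πext : A →⋆ₐ[ℂ] B, Continuous πext ∧ Function.Surjective πext ∧
      ∀ a : A₀, πext (a : A) = π a := by
  have hcontr : ∀ a : A₀, ‖π a‖ ≤ ‖a‖ :=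
    π.norm_apply_le_of_faithful PB hPBpos hPBfaithful fun a => hcompat a ▸ hPAcontr a
  have hπ_cont : Continuous π := AddMonoidHomClass.continuous_of_bound π 1 (by simpa using hcontr)
  let πext := π.extendOfDense hA₀ hπ_cont
  have hext : ∀ a : A₀, πext a = π a := π.extendOfDense_coe hA₀ hπ_cont
  refine ⟨πext, π.continuous_extendOfDense hA₀ hπ_cont, ?_, hext⟩
  have hB₀_sub : (B₀ : Set B) ⊆ Set.range πext := hπ ▸ fun _ ⟨a, ha⟩ => ⟨a, (hext a).trans ha⟩
  rw [← Set.range_eq_univ, ← πext.isClosed_range.closure_eq, ← Set.univ_subset_iff,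
    ← hB₀.closure_eq]
  exact closure_mono hB₀_sub

/-- extension lemma, Lemma 3.7 of the paper, surjectivity part.
Let `A, B` be C*-algebras, `C` a common C*-subalgebra of both (given by isometric
star-algebra embeddings `jA, jB`), `A₀ ⊆ A` and `B₀ ⊆ B` dense *-subalgebras, and
`π : A₀ → B₀` a surjective *-homomorphism.  Suppose `PA : A → C` is a conditional
expectation and `PB : B → C` is a faithful conditional expectation with
`PB ∘ π = PA` on `A₀`.  Then `π` extends to a surjective *-homomorphism from `A` onto `B`. -/
theorem stmt0
    {A B C : Type*} [CStarAlgebra A] [CStarAlgebra B] [CStarAlgebra C]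
    [PartialOrder C] [StarOrderedRing C]
    (jA : C →⋆ₐ[ℂ] A) (jB : C →⋆ₐ[ℂ] B)
    (hjA : Isometry jA) (hjB : Isometry jB)
    (A₀ : StarSubalgebra ℂ A) (B₀ : StarSubalgebra ℂ B)
    (hA₀ : Dense (A₀ : Set A)) (hB₀ : Dense (B₀ : Set B))
    (π : A₀ →⋆ₐ[ℂ] B) (hπ : Set.range π = (B₀ : Set B))
    (PA : A →ₗ[ℂ] C) (PB : B →ₗ[ℂ] C)
    -- `PA` is a conditional expectation onto `C`:
    (hPAcontr : ∀ a, ‖PA a‖ ≤ ‖a‖)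
    (hPAproj : ∀ c, PA (jA c) = c)
    (hPApos : ∀ a : A, 0 ≤ PA (star a * a))
    (hPAbimod : ∀ (c₁ c₂ : C) (a : A), PA (jA c₁ * a * jA c₂) = c₁ * PA a * c₂)
    -- `PB` is a faithful conditional expectation onto `C`:
    (hPBcontr : ∀ b, ‖PB b‖ ≤ ‖b‖)
    (hPBproj : ∀ c, PB (jB c) = c)
    (hPBpos : ∀ b : B, 0 ≤ PB (star b * b))
    (hPBbimod : ∀ (c₁ c₂ : C) (b : B), PB (jB c₁ * b * jB c₂) = c₁ * PB b * c₂)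
    (hPBfaithful : ∀ b : B, PB (star b * b) = 0 → b = 0)
    -- compatibility: `PB ∘ π = PA` on `A₀`:
    (hcompat : ∀ a : A₀, PB (π a) = PA (a : A)) :
    ∃ πext : A →⋆ₐ[ℂ] B, Continuous πext ∧ Function.Surjective πext ∧
      ∀ a : A₀, πext (a : A) = π a :=
  stmt0_general A₀ B₀ hA₀ hB₀ π hπ PA PB hPAcontr hPBpos hPBfaithful hcompat
end

section
/- Let B be a C*-algebra with a faithful conditional expectation P : B → C onto a C*-subalgebra C, and let B₀ ⊆ B be a dense *-subalgebra. Then for every b ∈ B, ‖b‖² = sup{‖P(c* b* b c)‖ : c ∈ B₀, P(c*c) ≤ 1}. -/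
/-!
Write `a = b⋆b`, so that `‖b‖² = ‖a‖` and the quantity to maximise is `‖P(c⋆ a c)‖`.
From `c⋆ a c ≤ ‖a‖ c⋆c` and positivity of `P`, every value is at most `‖a‖`. Conversely,
functional calculus cuts `a` off near the top of its spectrum: `d = g(a) ≠ 0` with
`d a d ≥ (‖a‖ - δ) d²`. Faithfulness gives `P(d²) ≠ 0`, and `c = d / ‖P(d²)‖^{1/2}` nearly
attains `‖a‖`. Finally, positive maps are continuous, and the constraint set
`{c | P(c⋆c) ≤ 1}` is the closure of its interior (it contains `t c` in its interior for
`t < 1`), so restricting `c` to the dense subalgebra `B₀` does not change the supremum.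
-/

open Filter Topology

lemma CStarAlgebra.exists_nonneg_ne_zero_smul_mul_self_le {A : Type*} [CStarAlgebra A]
    [PartialOrder A] [StarOrderedRing A] [Nontrivial A] {a : A} (ha : 0 ≤ a) {δ : ℝ} (hδ : 0 < δ) :
    ∃ d : A, 0 ≤ d ∧ d ≠ 0 ∧ (‖a‖ - δ) • (d * d) ≤ d * a * d := by
  -- `g` vanishes below `‖a‖ - δ`, and `g ‖a‖ = δ` with `‖a‖ ∈ spectrum ℝ a`, so `g a ≠ 0`.
  let g : ℝ → ℝ := fun x ↦ max 0 (x - (‖a‖ - δ))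
  refine ⟨cfc g a, cfc_nonneg fun x _ ↦ le_max_left _ _, fun h ↦ hδ.ne' ?_, ?_⟩
  · have hδmem : δ ∈ spectrum ℝ (cfc g a) := by
      rw [cfc_map_spectrum g a]
      exact ⟨‖a‖, CStarAlgebra.norm_mem_spectrum_of_nonneg ha, by simp [g, hδ.le]⟩
    simpa [h, spectrum.zero_eq] using hδmem
  · have hpt : ∀ x, (‖a‖ - δ) * (g x * g x) ≤ g x * x * g x := by
      intro x
      rcases le_total x (‖a‖ - δ) with hx | hx
      · simp [g, sub_nonpos.mpr hx]
      · have : g x = x - (‖a‖ - δ) := max_eq_right (sub_nonneg.mpr hx)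
        rw [this]; nlinarith [sq_nonneg (x - (‖a‖ - δ))]
    calc (‖a‖ - δ) • (cfc g a * cfc g a) = cfc (fun x ↦ (‖a‖ - δ) * (g x * g x)) a := by
          rw [cfc_const_mul _ _ a, cfc_mul g g a]
      _ ≤ cfc (fun x ↦ g x * x * g x) a := cfc_mono fun x _ ↦ hpt x
      _ = cfc g a * a * cfc g a := by
          rw [cfc_mul (fun x ↦ g x * x) g a, cfc_mul g (fun x ↦ x) a, cfc_id' ℝ a]

section

variable {B C : Type*} [CStarAlgebra B] [PartialOrder B] [StarOrderedRing B]
  [CStarAlgebra C] [PartialOrder C] [StarOrderedRing C]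

namespace PositiveLinearMap

lemma norm_apply_star_mul_mul_le (P : B →ₚ[ℂ] C) {a c : B} (ha : 0 ≤ a)
    (hc : P (star c * c) ≤ 1) : ‖P (star c * a * c)‖ ≤ ‖a‖ := by
  refine (CStarAlgebra.norm_le_iff_le_algebraMap _ (norm_nonneg a)
    (P.map_nonneg (star_left_conjugate_nonneg ha c))).mpr ?_
  calc P (star c * a * c) ≤ P (‖a‖ • (star c * c)) :=
        P.monotone' (CStarAlgebra.star_left_conjugate_le_norm_smul (.of_nonneg ha))
    _ = ‖a‖ • P (star c * c) := P.map_smul_of_tower _ _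
    _ ≤ ‖a‖ • 1 := smul_le_smul_of_nonneg_left hc (norm_nonneg a)
    _ = algebraMap ℝ C ‖a‖ := (Algebra.algebraMap_eq_smul_one _).symm

lemma exists_apply_star_mul_self_le_one_and_norm_sub_le (P : B →ₚ[ℂ] C)
    (hP : ∀ b, P (star b * b) = 0 → b = 0) {a : B} (ha : 0 ≤ a) {δ : ℝ} (hδ : 0 < δ) :
    ∃ c, P (star c * c) ≤ 1 ∧ ‖a‖ - δ ≤ ‖P (star c * a * c)‖ := by
  rcases le_or_gt ‖a‖ δ with hle | hlt
  · exact ⟨0, by simp, by simp; linarith⟩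
  have : Nontrivial B := nontrivial_of_ne a 0 (norm_pos_iff.mp (hδ.trans hlt))
  obtain ⟨d, hd0, hd, hdad⟩ := CStarAlgebra.exists_nonneg_ne_zero_smul_mul_self_le ha hδ
  have hds : star d = d := (IsSelfAdjoint.of_nonneg hd0).star_eq
  set s := ‖P (d * d)‖
  have hPdd : 0 ≤ P (d * d) := P.map_nonneg (by simpa [hds] using star_mul_self_nonneg d)
  have hs : 0 < s := norm_pos_iff.mpr fun h ↦ hd (hP d (by rwa [hds]))
  set c : B := (√s)⁻¹ • d
  have hconj : ∀ x, star c * x * c = s⁻¹ • (d * x * d) := by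
    intro x
    simp only [c, star_smul, star_trivial, hds, smul_mul_assoc, mul_smul_comm, smul_smul]
    rw [← mul_inv, Real.mul_self_sqrt hs.le]
  refine ⟨c, ?_, ?_⟩
  · calc P (star c * c) = s⁻¹ • P (d * d) := by
          rw [← P.map_smul_of_tower, ← mul_one (star c), hconj, mul_one]
      _ ≤ s⁻¹ • algebraMap ℝ C s :=
          smul_le_smul_of_nonneg_left (IsSelfAdjoint.of_nonneg hPdd).le_algebraMap_norm_self
            (by positivity)
      _ = 1 := by rw [Algebra.algebraMap_eq_smul_one, smul_smul, inv_mul_cancel₀ hs.ne', one_smul]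
  · have hlow : (‖a‖ - δ) * s ≤ ‖P (d * a * d)‖ := by
      have h := CStarAlgebra.norm_le_norm_of_nonneg_of_le
        (smul_nonneg (sub_nonneg.mpr hlt.le) hPdd)
        ((P.map_smul_of_tower _ _).symm.trans_le (P.monotone' hdad))
      rwa [norm_smul, Real.norm_of_nonneg (sub_nonneg.mpr hlt.le)] at h
    rw [hconj, P.map_smul_of_tower, norm_smul, Real.norm_of_nonneg (by positivity),
      le_inv_mul_iff₀ hs]
    linarith

lemma smul_mem_interior_setOf_apply_star_mul_self_le_one (P : B →ₚ[ℂ] C) {c : B}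
    (hc : P (star c * c) ≤ 1) {t : ℝ} (ht₀ : 0 ≤ t) (ht₁ : t < 1) :
    t • c ∈ interior {x : B | P (star x * x) ≤ 1} := by
  have hPc : P (star (t • c) * (t • c)) ≤ (t * t) • 1 := by
    simp only [star_smul, star_trivial, smul_mul_assoc, mul_smul_comm, smul_smul,
      P.map_smul_of_tower]
    exact smul_le_smul_of_nonneg_left hc (by positivity)
  have hU : IsOpen {x : B | ‖P (star x * x) - P (star (t • c) * (t • c))‖ < 1 - t * t} :=
    isOpen_lt (by fun_prop) continuous_const
  refine interior_maximal (fun x hx ↦ ?_) hU (by simp; nlinarith)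
  set u := P (star (t • c) * (t • c))
  have hΔ : IsSelfAdjoint (P (star x * x) - u) :=
    .sub (.of_nonneg (P.map_nonneg (star_mul_self_nonneg x)))
      (.of_nonneg (P.map_nonneg (star_mul_self_nonneg _)))
  calc P (star x * x) = u + (P (star x * x) - u) := by abel
    _ ≤ (t * t) • 1 + (1 - t * t) • 1 := by
        refine add_le_add hPc (hΔ.le_algebraMap_norm_self.trans ?_)
        rw [Algebra.algebraMap_eq_smul_one]
        exact smul_le_smul_of_nonneg_right (le_of_lt hx) zero_le_one
    _ = 1 := by rw [← add_smul, add_sub_cancel, one_smul]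

lemma setOf_apply_star_mul_self_le_one_subset_closure_inter (P : B →ₚ[ℂ] C) {D : Set B}
    (hD : Dense D) :
    {x : B | P (star x * x) ≤ 1} ⊆ closure {x ∈ D | P (star x * x) ≤ 1} := by
  intro c hc
  have hlim : Tendsto (fun t : ℝ ↦ t • c) (𝓝[<] 1) (𝓝 c) :=
    ((by fun_prop : Continuous fun t : ℝ ↦ t • c).tendsto' 1 c (one_smul ℝ c)).mono_left
      nhdsWithin_le_nhds
  have hint : c ∈ closure (interior {x : B | P (star x * x) ≤ 1}) :=
    mem_closure_of_tendsto hlim <| eventually_of_mem (Ioo_mem_nhdsLT zero_lt_one)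
      fun t ht ↦ P.smul_mem_interior_setOf_apply_star_mul_self_le_one hc ht.1.le ht.2
  refine closure_minimal ?_ isClosed_closure hint
  calc interior {x : B | P (star x * x) ≤ 1}
      _ ⊆ closure (interior {x : B | P (star x * x) ≤ 1} ∩ D) :=
        hD.open_subset_closure_inter isOpen_interior
      _ ⊆ closure {x ∈ D | P (star x * x) ≤ 1} :=
        closure_mono fun _ hx ↦
          ⟨hx.2, interior_subset (s := {x : B | P (star x * x) ≤ 1}) hx.1⟩

lemma isLUB_norm_apply_star_mul_mul (P : B →ₚ[ℂ] C) (hP : ∀ b, P (star b * b) = 0 → b = 0)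
    {D : Set B} (hD : Dense D) {a : B} (ha : 0 ≤ a) :
    IsLUB ((fun c ↦ ‖P (star c * a * c)‖) '' {x ∈ D | P (star x * x) ≤ 1}) ‖a‖ := by
  set f : B → ℝ := fun c ↦ ‖P (star c * a * c)‖
  set K := {x : B | P (star x * x) ≤ 1}
  have hub : ∀ c ∈ K, f c ≤ ‖a‖ := fun c hc ↦ P.norm_apply_star_mul_mul_le ha hc
  have hK : ‖a‖ ∈ closure (f '' K) := by
    refine Metric.mem_closure_iff.mpr fun ε hε ↦ ?_
    obtain ⟨c, hc, hac⟩ :=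
      P.exists_apply_star_mul_self_le_one_and_norm_sub_le hP ha (half_pos hε)
    refine ⟨f c, ⟨c, hc, rfl⟩, ?_⟩
    rw [Real.dist_eq, abs_sub_lt_iff]
    constructor <;> linarith [hub c hc]
  refine isLUB_of_mem_closure (Set.forall_mem_image.mpr fun c hc ↦ hub c hc.2) ?_
  exact closure_minimal ((Set.image_mono (P.setOf_apply_star_mul_self_le_one_subset_closure_inter
    hD)).trans (image_closure_subset_closure_image (by fun_prop))) isClosed_closure hK

end PositiveLinearMap

end

theorem stmt2_general
    {B C : Type*} [CStarAlgebra B] [CStarAlgebra C]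
    [PartialOrder C] [StarOrderedRing C]
    (P : B →ₗ[ℂ] C)
    -- `P` is a conditional expectation onto `C`:
    (hPpos : ∀ b : B, 0 ≤ P (star b * b))
    -- `P` is faithful:
    (hPfaithful : ∀ b : B, P (star b * b) = 0 → b = 0)
    (B₀ : StarSubalgebra ℂ B) (hB₀ : Dense (B₀ : Set B))
    (b : B) :
    ‖b‖ ^ 2 =
      sSup {r : ℝ | ∃ c ∈ B₀, P (star c * c) ≤ 1 ∧
        r = ‖P (star c * (star b * (b * c)))‖} := by
  let : PartialOrder B := CStarAlgebra.spectralOrder B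
  let : StarOrderedRing B := CStarAlgebra.spectralOrderedRing B
  let Q : B →ₚ[ℂ] C := .mk₀ P fun x hx ↦ by
    obtain ⟨y, rfl⟩ := CStarAlgebra.nonneg_iff_eq_star_mul_self.mp hx
    exact hPpos y
  have hQ : ∀ x, Q x = P x := fun _ ↦ rfl
  have hset : {r : ℝ | ∃ c ∈ B₀, P (star c * c) ≤ 1 ∧ r = ‖P (star c * (star b * (b * c)))‖} =
      (fun c ↦ ‖Q (star c * (star b * b) * c)‖) '' {x ∈ (B₀ : Set B) | Q (star x * x) ≤ 1} := by
    ext r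
    simp [hQ, mul_assoc, eq_comm, and_assoc]
  have hlub := Q.isLUB_norm_apply_star_mul_mul hPfaithful hB₀ (star_mul_self_nonneg b)
  rw [hset, hlub.csSup_eq (.image _ ⟨0, B₀.zero_mem, by simp⟩), CStarRing.norm_star_mul_self, sq]

/-- Let `B` be a C*-algebra with a faithful conditional expectation
`P : B → C` onto a C*-subalgebra `C` (given by an isometric star-algebra embedding `jC`),
and let `B₀ ⊆ B` be a dense *-subalgebra.  Then for every `b ∈ B`,
`‖b‖² = sup {‖P(c* b* b c)‖ : c ∈ B₀, P(c*c) ≤ 1}`. -/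
theorem stmt2
    {B C : Type*} [CStarAlgebra B] [CStarAlgebra C]
    [PartialOrder C] [StarOrderedRing C]
    (jC : C →⋆ₐ[ℂ] B) (hjC : Isometry jC)
    (P : B →ₗ[ℂ] C)
    -- `P` is a conditional expectation onto `C`:
    (hPcontr : ∀ b, ‖P b‖ ≤ ‖b‖)
    (hPproj : ∀ c, P (jC c) = c)
    (hPpos : ∀ b : B, 0 ≤ P (star b * b))
    (hPbimod : ∀ (c₁ c₂ : C) (b : B), P (jC c₁ * b * jC c₂) = c₁ * P b * c₂)
    -- `P` is faithful:
    (hPfaithful : ∀ b : B, P (star b * b) = 0 → b = 0)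
    (B₀ : StarSubalgebra ℂ B) (hB₀ : Dense (B₀ : Set B))
    (b : B) :
    ‖b‖ ^ 2 =
      sSup {r : ℝ | ∃ c ∈ B₀, P (star c * c) ≤ 1 ∧
        r = ‖P (star c * (star b * (b * c)))‖} :=
  stmt2_general P hPpos hPfaithful B₀ hB₀ b
end

section
/- With the notation of the Choi-matrix construction: φ : M_n(ℂ) → A a contractive completely positive map, b = [φ(e_{ij})]^{1/2} ∈ M_n(A), and η = Σ_{j,k} ξ_j ⊗ ξ_k ⊗ b_{kj} ∈ ℓ²_n ⊗ ℓ²_n ⊗ A, we have ‖η‖² = ‖φ(1)‖ ≤ 1. -/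
/-!
`∑ j, ∑ k, b_{kj}* b_{kj}` is the trace of `b* b`, i.e. of the Choi matrix `[φ(e_{ij})]`, and by
linearity that trace is `φ (∑ i, e_{ii}) = φ 1`. Contractivity then gives `‖φ 1‖ ≤ ‖1‖ ≤ 1`.
-/

open Matrix

attribute [local instance] Matrix.linftyOpNormedRing Matrix.linftyOpNormedAlgebra

theorem Matrix.trace_conjTranspose_mul_self_eq_sum {m n R : Type*} [Fintype m] [Fintype n]
    [NonUnitalNonAssocSemiring R] [StarRing R] (b : Matrix m n R) :
    trace (bᴴ * b) = ∑ j, ∑ k, star (b k j) * b k j := by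
  simp [trace, mul_apply]

theorem Matrix.trace_choi {n R A : Type*} [Fintype n] [DecidableEq n] [CommSemiring R]
    [AddCommMonoid A] [Module R A] (φ : Matrix n n R →ₗ[R] A) :
    trace (of fun i j => φ (single i j 1)) = φ 1 := by
  simp [trace, ← map_sum, sum_single_one]

theorem Matrix.linfty_opNorm_one_le {n α : Type*} [Fintype n] [DecidableEq n] [NormedRing α]
    [NormOneClass α] : ‖(1 : Matrix n n α)‖ ≤ 1 := by
  rw [← diagonal_one, linfty_opNorm_diagonal]
  exact (pi_norm_const_le (1 : α)).trans norm_one.le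

theorem stmt7_general
    {A : Type*} [CStarAlgebra A] (n : ℕ)
    (φ : Matrix (Fin n) (Fin n) ℂ →ₗ[ℂ] A)
    -- `φ` is contractive:
    (hφcontr : ∀ m : Matrix (Fin n) (Fin n) ℂ, ‖φ m‖ ≤ ‖m‖)
    -- `b` is the positive square root of the Choi matrix `[φ(e_{ij})]`:
    (b : Matrix (Fin n) (Fin n) A)
    (hb : star b * b = Matrix.of fun i j => φ (Matrix.single i j (1 : ℂ))) :
    ‖∑ j, ∑ k, star (b k j) * b k j‖ = ‖φ 1‖ ∧ ‖φ 1‖ ≤ 1 := by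
  have hsum : ∑ j, ∑ k, star (b k j) * b k j = φ 1 := by
    rw [← trace_conjTranspose_mul_self_eq_sum, ← star_eq_conjTranspose, hb, trace_choi]
  exact ⟨by rw [hsum], (hφcontr 1).trans linfty_opNorm_one_le⟩

/-- With the notation of the Choi-matrix construction:
`φ : Mₙ(ℂ) → A` a contractive completely positive map, `b = [φ(e_{ij})]^{1/2} ∈ Mₙ(A)`,
and `η = Σ_{j,k} ξ_j ⊗ ξ_k ⊗ b_{kj} ∈ ℓ²ₙ ⊗ ℓ²ₙ ⊗ A`, we have
`‖η‖² = ‖⟨η, η⟩‖ = ‖Σ_{j,k} b_{kj}* b_{kj}‖ = ‖φ(1)‖ ≤ 1`. -/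
theorem stmt7
    {A : Type*} [CStarAlgebra A] (n : ℕ)
    (φ : Matrix (Fin n) (Fin n) ℂ →ₗ[ℂ] A)
    -- `φ` is completely positive:
    (hφcp : ∀ (k : ℕ) (M : Matrix (Fin k) (Fin k) (Matrix (Fin n) (Fin n) ℂ)),
      (∃ N : Matrix (Fin k) (Fin k) (Matrix (Fin n) (Fin n) ℂ), M = star N * N) →
        ∃ L : Matrix (Fin k) (Fin k) A, M.map (fun m => φ m) = star L * L)
    -- `φ` is contractive:
    (hφcontr : ∀ m : Matrix (Fin n) (Fin n) ℂ, ‖φ m‖ ≤ ‖m‖)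
    -- `b` is the positive square root of the Choi matrix `[φ(e_{ij})]`:
    (b : Matrix (Fin n) (Fin n) A)
    (hbsa : star b = b)
    (hb : star b * b = Matrix.of fun i j => φ (Matrix.single i j (1 : ℂ))) :
    ‖∑ j, ∑ k, star (b k j) * b k j‖ = ‖φ 1‖ ∧ ‖φ 1‖ ≤ 1 :=
  stmt7_general n φ hφcontr b hb
end

section
/- Let Γ be a discrete group acting on a C*-algebra A by *-automorphisms. Then the reduced crossed product A ⋊_r Γ is the unique C*-completion of the *-algebra C_c(Γ, A) of finitely supported A-valued functions (with twisted convolution and involution) admitting a faithful conditional expectation onto A extending evaluation at the identity; in particular, any two such completions are canonically *-isomorphic via the identity on C_c(Γ, A). -/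
/-!
Write `x₁ = j₁ f`, `x₂ = j₂ f`. In `B₂` we have `x₂* x₂ ≤ ‖x₂‖²`, so positivity of `P₂` gives
`P₂(y* x₂* x₂ y) ≤ ‖x₂‖² P₂(y* y)` for `y = j₂ g`. Both sides are values at the identity of
elements of `C_c(Γ, A)`, so the same inequality holds for `P₁` and `y = j₁ g`, and by density and
continuity of `P₁` for every `y ∈ B₁`. A faithful positive map detects positivity, hence
`x₁* x₁ ≤ ‖x₂‖²` and `‖x₁‖ ≤ ‖x₂‖`. By symmetry the identity on `C_c(Γ, A)` is isometric for the
two norms, so it extends to an isometric *-isomorphism between the completions.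
-/

/-- The twisted convolution product on `C_c(Γ, A) = Γ →₀ A` associated with an action
`act` of `Γ` on `A`: `(f * g)(γ) = Σ_{γ = αβ} f(α) · α(g(β))`. -/
noncomputable def crossedMul {Γ A : Type*} [Group Γ] [Ring A] [Algebra ℂ A] [StarRing A]
    (act : Γ → A ≃⋆ₐ[ℂ] A) (f g : Γ →₀ A) : Γ →₀ A :=
  f.sum fun α x => g.sum fun β y => Finsupp.single (α * β) (x * act α y)

/-- The twisted involution on `C_c(Γ, A)`: `f*(γ) = α_γ(f(γ⁻¹)*)`. -/
noncomputable def crossedStar {Γ A : Type*} [Group Γ] [Ring A] [Algebra ℂ A] [StarRing A]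
    (act : Γ → A ≃⋆ₐ[ℂ] A) (f : Γ →₀ A) : Γ →₀ A :=
  f.sum fun γ x => Finsupp.single γ⁻¹ (act γ⁻¹ (star x))

theorem star_mul_algebraMap_mul {R : Type*} [Semiring R] [Algebra ℝ R] [Star R] (ξ : R) (t : ℝ) :
    star ξ * algebraMap ℝ R t * ξ = t • (star ξ * ξ) := by
  rw [Algebra.algebraMap_eq_smul_one, mul_smul_comm, mul_one, smul_mul_assoc]

theorem Real.sqrt_negPart_mul_mul_sqrt_negPart (x : ℝ) : √x⁻ * x * √x⁻ = -(x⁻ * x⁻) := by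
  rw [mul_right_comm, Real.mul_self_sqrt (negPart_nonneg x)]
  rcases le_total x 0 with hx | hx
  · rw [negPart_eq_neg.mpr hx]; ring
  · simp [negPart_eq_zero.mpr hx]

section Expectation

variable {A B : Type*} [CStarAlgebra A] [PartialOrder A] [StarOrderedRing A]
  [CStarAlgebra B] [PartialOrder B] [StarOrderedRing B] {P : B →ₗ[ℂ] A}

theorem map_conj_le_of_le_algebraMap (hP : ∀ b, 0 ≤ P (star b * b)) {a : B} {t : ℝ}
    (hat : a ≤ algebraMap ℝ B t) (ξ : B) : P (star ξ * a * ξ) ≤ t • P (star ξ * ξ) := by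
  obtain ⟨b, hb⟩ := CStarAlgebra.nonneg_iff_eq_star_mul_self.mp
    (sub_nonneg.mpr (star_left_conjugate_le_conjugate hat ξ))
  rw [← sub_nonneg, ← LinearMap.map_smul_of_tower, ← map_sub, ← star_mul_algebraMap_mul, hb]
  exact hP b

/-- Testing against `ξ = √h⁻` gives `ξ* h ξ = -(h⁻)²`, so faithfulness forces `h⁻ = 0`. -/
theorem nonneg_of_forall_map_conj_nonneg (hP : ∀ b, 0 ≤ P (star b * b))
    (hfaith : ∀ b, P (star b * b) = 0 → b = 0) {h : B} (hh : IsSelfAdjoint h)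
    (H : ∀ ξ, 0 ≤ P (star ξ * h * ξ)) : 0 ≤ h := by
  let c := cfc (fun x : ℝ => x⁻) h
  let ξ := cfc (fun x : ℝ => √x⁻) h
  have hc : IsSelfAdjoint c := cfc_predicate _ h
  have hξ : star ξ * h * ξ = -(star c * c) := by
    rw [(cfc_predicate _ h : IsSelfAdjoint ξ).star_eq, hc.star_eq, ← cfc_mul _ _ h, ← cfc_neg,
      cfc_congr fun x _ => (Real.sqrt_negPart_mul_mul_sqrt_negPart x).symm,
      cfc_mul (fun x : ℝ => √x⁻ * x) (fun x : ℝ => √x⁻) h,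
      cfc_mul (fun x : ℝ => √x⁻) (fun x : ℝ => x) h, cfc_id' ℝ h]
  have hc0 : c = 0 := hfaith c <| le_antisymm (by simpa [hξ] using H ξ) (hP c)
  refine CStarAlgebra.nonneg_iff_isSelfAdjoint_and_negPart_eq_zero.mpr ⟨hh, ?_⟩
  rwa [CFC.negPart_def, cfcₙ_eq_cfc (hf0 := negPart_zero)]

theorem le_algebraMap_of_forall_map_conj_le (hP : ∀ b, 0 ≤ P (star b * b))
    (hfaith : ∀ b, P (star b * b) = 0 → b = 0) {a : B} (ha : IsSelfAdjoint a) {t : ℝ}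
    (H : ∀ ξ, P (star ξ * a * ξ) ≤ t • P (star ξ * ξ)) : a ≤ algebraMap ℝ B t := by
  refine sub_nonneg.mp <| nonneg_of_forall_map_conj_nonneg hP hfaith
    ((IsSelfAdjoint.algebraMap B (.all t)).sub ha) fun ξ => ?_
  rw [mul_sub, sub_mul, star_mul_algebraMap_mul, map_sub, LinearMap.map_smul_of_tower, sub_nonneg]
  exact H ξ

end Expectation

section Completion

variable {V A B₁ B₂ : Type*} [CStarAlgebra A] [PartialOrder A] [StarOrderedRing A]
  [CStarAlgebra B₁] [CStarAlgebra B₂] {mul : V → V → V} {invol : V → V} {ev : V → A}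
  {j₁ : V → B₁} {j₂ : V → B₂} {P₁ : B₁ →ₗ[ℂ] A} {P₂ : B₂ →ₗ[ℂ] A}

theorem norm_le_of_faithful_expectation
    (hj₁mul : ∀ f g, j₁ (mul f g) = j₁ f * j₁ g) (hj₂mul : ∀ f g, j₂ (mul f g) = j₂ f * j₂ g)
    (hj₁star : ∀ f, j₁ (invol f) = star (j₁ f)) (hj₂star : ∀ f, j₂ (invol f) = star (j₂ f))
    (hj₁dense : DenseRange j₁) (hP₁cont : Continuous P₁)
    (hP₁pos : ∀ b, 0 ≤ P₁ (star b * b)) (hP₂pos : ∀ b, 0 ≤ P₂ (star b * b))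
    (hP₁faith : ∀ b, P₁ (star b * b) = 0 → b = 0)
    (hP₁ev : ∀ f, P₁ (j₁ f) = ev f) (hP₂ev : ∀ f, P₂ (j₂ f) = ev f) (f : V) :
    ‖j₁ f‖ ≤ ‖j₂ f‖ := by
  let _ := CStarAlgebra.spectralOrder B₁
  let _ := CStarAlgebra.spectralOrderedRing B₁
  let _ := CStarAlgebra.spectralOrder B₂
  let _ := CStarAlgebra.spectralOrderedRing B₂
  have hconj (g : V) : P₁ (star (j₁ g) * (star (j₁ f) * j₁ f) * j₁ g) ≤
      (‖j₂ f‖ * ‖j₂ f‖) • P₁ (star (j₁ g) * j₁ g) := by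
    have h₂ := map_conj_le_of_le_algebraMap hP₂pos
      (IsSelfAdjoint.star_mul_self (j₂ f)).le_algebraMap_norm_self (j₂ g)
    rw [CStarRing.norm_star_mul_self] at h₂
    simp only [← hj₁mul, ← hj₁star, hP₁ev]
    simpa only [← hj₂mul, ← hj₂star, hP₂ev] using h₂
  have hle : star (j₁ f) * j₁ f ≤ algebraMap ℝ B₁ (‖j₂ f‖ * ‖j₂ f‖) :=
    le_algebraMap_of_forall_map_conj_le hP₁pos hP₁faith (.star_mul_self _) fun ξ =>
      hj₁dense.induction_on ξ (isClosed_le (by fun_prop) (by fun_prop)) hconj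
  rw [← CStarAlgebra.norm_le_iff_le_algebraMap _ (by positivity) (star_mul_self_nonneg _),
    CStarRing.norm_star_mul_self] at hle
  exact (mul_self_le_mul_self_iff (norm_nonneg _) (norm_nonneg _)).mpr hle

end Completion

section Extension

variable {V B₁ B₂ : Type*} [AddCommGroup V] [Module ℂ V]
  [NormedRing B₁] [NormedAlgebra ℂ B₁] [StarRing B₁] [ContinuousStar B₁]
  [NormedRing B₂] [NormedAlgebra ℂ B₂] [StarRing B₂] [ContinuousStar B₂] [CompleteSpace B₂]
  {mul : V → V → V} {invol : V → V} {j₁ : V →ₗ[ℂ] B₁} {j₂ : V →ₗ[ℂ] B₂}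

theorem exists_isometry_nonUnitalStarAlgHom_extend
    (hj₁mul : ∀ f g, j₁ (mul f g) = j₁ f * j₁ g) (hj₂mul : ∀ f g, j₂ (mul f g) = j₂ f * j₂ g)
    (hj₁star : ∀ f, j₁ (invol f) = star (j₁ f)) (hj₂star : ∀ f, j₂ (invol f) = star (j₂ f))
    (hj₁dense : DenseRange j₁) (hnorm : ∀ f, ‖j₁ f‖ = ‖j₂ f‖) :
    ∃ Φ : B₁ →⋆ₙₐ[ℂ] B₂, Isometry Φ ∧ ∀ f, Φ (j₁ f) = j₂ f := by
  let _ : SeminormedAddCommGroup V := SeminormedAddCommGroup.induced V B₁ j₁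
  let _ : NormedSpace ℂ V := NormedSpace.induced ℂ V B₁ j₁
  let e₁ : V →L[ℂ] B₁ := j₁.mkContinuous 1 fun f => (one_mul _).ge
  let e₂ : V →L[ℂ] B₂ := j₂.mkContinuous 1 fun f => by rw [one_mul, ← hnorm]; rfl
  have he₁ : IsUniformInducing e₁ :=
    (AddMonoidHomClass.isometry_of_norm e₁ fun _ => rfl).isUniformInducing
  let Φ := e₂.extend e₁
  have hΦ (f : V) : Φ (j₁ f) = j₂ f := e₂.extend_eq hj₁dense he₁ f
  have hΦnorm (b : B₁) : ‖Φ b‖ = ‖b‖ :=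
    hj₁dense.induction_on b (isClosed_eq (by fun_prop) (by fun_prop)) fun f => by
      rw [hΦ, hnorm]
  have hΦmul (a b : B₁) : Φ (a * b) = Φ a * Φ b :=
    hj₁dense.induction_on₂ (p := fun a b => Φ (a * b) = Φ a * Φ b)
      (isClosed_eq (by fun_prop) (by fun_prop)) (fun f g => by rw [← hj₁mul, hΦ, hΦ, hΦ, hj₂mul])
      a b
  have hΦstar (b : B₁) : Φ (star b) = star (Φ b) :=
    hj₁dense.induction_on b (isClosed_eq (by fun_prop) (by fun_prop)) fun f => by
      rw [← hj₁star, hΦ, hΦ, hj₂star]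
  exact ⟨{ Φ with map_zero' := map_zero Φ, map_mul' := hΦmul, map_star' := hΦstar },
    AddMonoidHomClass.isometry_of_norm _ hΦnorm, hΦ⟩

theorem exists_isometry_starAlgEquiv_extend [CompleteSpace B₁]
    (hj₁mul : ∀ f g, j₁ (mul f g) = j₁ f * j₁ g) (hj₂mul : ∀ f g, j₂ (mul f g) = j₂ f * j₂ g)
    (hj₁star : ∀ f, j₁ (invol f) = star (j₁ f)) (hj₂star : ∀ f, j₂ (invol f) = star (j₂ f))
    (hj₁dense : DenseRange j₁) (hj₂dense : DenseRange j₂) (hnorm : ∀ f, ‖j₁ f‖ = ‖j₂ f‖) :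
    ∃ Φ : B₁ ≃⋆ₐ[ℂ] B₂, Isometry Φ ∧ ∀ f, Φ (j₁ f) = j₂ f := by
  obtain ⟨Φ, hΦiso, hΦ⟩ :=
    exists_isometry_nonUnitalStarAlgHom_extend hj₁mul hj₂mul hj₁star hj₂star hj₁dense hnorm
  have hrange : Set.range j₂ ⊆ Set.range Φ := by
    rintro - ⟨f, rfl⟩
    exact ⟨j₁ f, hΦ f⟩
  have hsurj : Function.Surjective Φ := Set.range_eq_univ.mp <| by
    simpa [hΦiso.isClosedEmbedding.isClosed_range.closure_eq] using
      (hj₂dense.mono hrange).closure_eq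
  exact ⟨StarAlgEquiv.ofBijective Φ ⟨hΦiso.injective, hsurj⟩, hΦiso, hΦ⟩

end Extension

theorem stmt15_general
    {Γ : Type*} [Group Γ] {A : Type*} [CStarAlgebra A]
    [PartialOrder A] [StarOrderedRing A]
    -- the action of `Γ` on `A` by *-automorphisms:
    (act : Γ → A ≃⋆ₐ[ℂ] A)
    -- two C*-completions of `C_c(Γ, A)`:
    {B₁ B₂ : Type*} [CStarAlgebra B₁] [CStarAlgebra B₂]
    (j₁ : (Γ →₀ A) →ₗ[ℂ] B₁) (j₂ : (Γ →₀ A) →ₗ[ℂ] B₂)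
    (hj₁mul : ∀ f g, j₁ (crossedMul act f g) = j₁ f * j₁ g)
    (hj₂mul : ∀ f g, j₂ (crossedMul act f g) = j₂ f * j₂ g)
    (hj₁star : ∀ f, j₁ (crossedStar act f) = star (j₁ f))
    (hj₂star : ∀ f, j₂ (crossedStar act f) = star (j₂ f))
    (hj₁dense : Dense (Set.range j₁)) (hj₂dense : Dense (Set.range j₂))
    -- faithful conditional expectations onto `A` extending evaluation at the identity:
    (P₁ : B₁ →ₗ[ℂ] A) (P₂ : B₂ →ₗ[ℂ] A)
    (hP₁contr : ∀ b, ‖P₁ b‖ ≤ ‖b‖) (hP₂contr : ∀ b, ‖P₂ b‖ ≤ ‖b‖)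
    (hP₁pos : ∀ b : B₁, 0 ≤ P₁ (star b * b)) (hP₂pos : ∀ b : B₂, 0 ≤ P₂ (star b * b))
    (hP₁ev : ∀ f : Γ →₀ A, P₁ (j₁ f) = f 1) (hP₂ev : ∀ f : Γ →₀ A, P₂ (j₂ f) = f 1)
    (hP₁faith : ∀ b : B₁, P₁ (star b * b) = 0 → b = 0)
    (hP₂faith : ∀ b : B₂, P₂ (star b * b) = 0 → b = 0) :
    ∃ Φ : B₁ ≃⋆ₐ[ℂ] B₂, Isometry Φ ∧ ∀ f : Γ →₀ A, Φ (j₁ f) = j₂ f := by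
  have hnorm (f : Γ →₀ A) : ‖j₁ f‖ = ‖j₂ f‖ := le_antisymm
    (norm_le_of_faithful_expectation hj₁mul hj₂mul hj₁star hj₂star hj₁dense
      (AddMonoidHomClass.continuous_of_bound P₁ 1 fun b => (hP₁contr b).trans_eq (one_mul _).symm)
      hP₁pos hP₂pos hP₁faith hP₁ev hP₂ev f)
    (norm_le_of_faithful_expectation hj₂mul hj₁mul hj₂star hj₁star hj₂dense
      (AddMonoidHomClass.continuous_of_bound P₂ 1 fun b => (hP₂contr b).trans_eq (one_mul _).symm)
      hP₂pos hP₁pos hP₂faith hP₂ev hP₁ev f)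
  exact exists_isometry_starAlgEquiv_extend hj₁mul hj₂mul hj₁star hj₂star hj₁dense hj₂dense hnorm

/-- Let `Γ` be a discrete group acting on a C*-algebra `A` by
*-automorphisms.  The reduced crossed product `A ⋊_r Γ` is the unique C*-completion of
the *-algebra `C_c(Γ, A)` (finitely supported `A`-valued functions with twisted
convolution and involution) admitting a faithful conditional expectation onto `A`
extending evaluation at the identity: any two such completions `B₁`, `B₂` are
canonically *-isomorphic via the identity on `C_c(Γ, A)`. -/
theorem stmt15
    {Γ : Type*} [Group Γ] {A : Type*} [CStarAlgebra A]
    [PartialOrder A] [StarOrderedRing A]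
    -- the action of `Γ` on `A` by *-automorphisms:
    (act : Γ → A ≃⋆ₐ[ℂ] A)
    (hact_one : ∀ a : A, act 1 a = a)
    (hact_mul : ∀ (γ δ : Γ) (a : A), act (γ * δ) a = act γ (act δ a))
    -- two C*-completions of `C_c(Γ, A)`:
    {B₁ B₂ : Type*} [CStarAlgebra B₁] [CStarAlgebra B₂]
    (j₁ : (Γ →₀ A) →ₗ[ℂ] B₁) (j₂ : (Γ →₀ A) →ₗ[ℂ] B₂)
    (hj₁mul : ∀ f g, j₁ (crossedMul act f g) = j₁ f * j₁ g)
    (hj₂mul : ∀ f g, j₂ (crossedMul act f g) = j₂ f * j₂ g)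
    (hj₁star : ∀ f, j₁ (crossedStar act f) = star (j₁ f))
    (hj₂star : ∀ f, j₂ (crossedStar act f) = star (j₂ f))
    (hj₁inj : Function.Injective j₁) (hj₂inj : Function.Injective j₂)
    (hj₁dense : Dense (Set.range j₁)) (hj₂dense : Dense (Set.range j₂))
    -- faithful conditional expectations onto `A` extending evaluation at the identity:
    (P₁ : B₁ →ₗ[ℂ] A) (P₂ : B₂ →ₗ[ℂ] A)
    (hP₁contr : ∀ b, ‖P₁ b‖ ≤ ‖b‖) (hP₂contr : ∀ b, ‖P₂ b‖ ≤ ‖b‖)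
    (hP₁pos : ∀ b : B₁, 0 ≤ P₁ (star b * b)) (hP₂pos : ∀ b : B₂, 0 ≤ P₂ (star b * b))
    (hP₁ev : ∀ f : Γ →₀ A, P₁ (j₁ f) = f 1) (hP₂ev : ∀ f : Γ →₀ A, P₂ (j₂ f) = f 1)
    (hP₁faith : ∀ b : B₁, P₁ (star b * b) = 0 → b = 0)
    (hP₂faith : ∀ b : B₂, P₂ (star b * b) = 0 → b = 0) :
    ∃ Φ : B₁ ≃⋆ₐ[ℂ] B₂, Isometry Φ ∧ ∀ f : Γ →₀ A, Φ (j₁ f) = j₂ f :=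
  stmt15_general act j₁ j₂ hj₁mul hj₂mul hj₁star hj₂star hj₁dense hj₂dense P₁ P₂ hP₁contr hP₂contr
    hP₁pos hP₂pos hP₁ev hP₂ev hP₁faith hP₂faith
end
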